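/- arXiv:2109.13350 — 4 statements merged into one kernel-verified Lean document; each statement's English description precedes it below -/
import Mathlib

section
/- For a bounded linear operator T on a complex Banach space, σ_e(T) ⊆ σ_a(T) if and only if σ_bf(T) ⊆ σ_a(T). -/
open Filter Topology

variable {X : Type*} [NormedAddCommGroup X] [NormedSpace ℂ X] [CompleteSpace X]

/-- `S` is a Fredholm operator. -/
def IsFredholm (S : X →L[ℂ] X) : Prop :=
  FiniteDimensional ℂ (LinearMap.ker (S : X →ₗ[ℂ] X)) ∧
  IsClosed ((LinearMap.range (S : X →ₗ[ℂ] X) : Submodule ℂ X) : Set X) ∧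
  FiniteDimensional ℂ (X ⧸ LinearMap.range (S : X →ₗ[ℂ] X))

/-- `S` is a Weyl operator: Fredholm of index zero. -/
def IsWeyl (S : X →L[ℂ] X) : Prop :=
  IsFredholm S ∧
  Module.finrank ℂ (LinearMap.ker (S : X →ₗ[ℂ] X)) = Module.finrank ℂ (X ⧸ LinearMap.range (S : X →ₗ[ℂ] X))

/-- `S` is a B-Fredholm operator: for some `n`, `R(S^n)` is closed and the restriction
`S_[n] : R(S^n) → R(S^n)` is Fredholm (its kernel is `ker S ⊓ R(S^n)`, its range is
`R(S^(n+1))`). -/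
def IsBFredholm (S : X →L[ℂ] X) : Prop :=
  ∃ n : ℕ, IsClosed ((LinearMap.range ((S ^ n : X →L[ℂ] X) : X →ₗ[ℂ] X) : Submodule ℂ X) : Set X) ∧
    IsClosed ((LinearMap.range ((S ^ (n + 1) : X →L[ℂ] X) : X →ₗ[ℂ] X) : Submodule ℂ X) : Set X) ∧
    FiniteDimensional ℂ ↥(LinearMap.ker (S : X →ₗ[ℂ] X) ⊓ LinearMap.range ((S ^ n : X →L[ℂ] X) : X →ₗ[ℂ] X)) ∧
    FiniteDimensional ℂ (↥(LinearMap.range ((S ^ n : X →L[ℂ] X) : X →ₗ[ℂ] X)) ⧸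
      Submodule.comap (LinearMap.range ((S ^ n : X →L[ℂ] X) : X →ₗ[ℂ] X)).subtype (LinearMap.range ((S ^ (n + 1) : X →L[ℂ] X) : X →ₗ[ℂ] X)))

/-- `S` is a B-Weyl operator: B-Fredholm of index zero. -/
def IsBWeyl (S : X →L[ℂ] X) : Prop :=
  ∃ n : ℕ, IsClosed ((LinearMap.range ((S ^ n : X →L[ℂ] X) : X →ₗ[ℂ] X) : Submodule ℂ X) : Set X) ∧
    IsClosed ((LinearMap.range ((S ^ (n + 1) : X →L[ℂ] X) : X →ₗ[ℂ] X) : Submodule ℂ X) : Set X) ∧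
    FiniteDimensional ℂ ↥(LinearMap.ker (S : X →ₗ[ℂ] X) ⊓ LinearMap.range ((S ^ n : X →L[ℂ] X) : X →ₗ[ℂ] X)) ∧
    FiniteDimensional ℂ (↥(LinearMap.range ((S ^ n : X →L[ℂ] X) : X →ₗ[ℂ] X)) ⧸
      Submodule.comap (LinearMap.range ((S ^ n : X →L[ℂ] X) : X →ₗ[ℂ] X)).subtype (LinearMap.range ((S ^ (n + 1) : X →L[ℂ] X) : X →ₗ[ℂ] X))) ∧
    Module.finrank ℂ ↥(LinearMap.ker (S : X →ₗ[ℂ] X) ⊓ LinearMap.range ((S ^ n : X →L[ℂ] X) : X →ₗ[ℂ] X)) =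
      Module.finrank ℂ (↥(LinearMap.range ((S ^ n : X →L[ℂ] X) : X →ₗ[ℂ] X)) ⧸
        Submodule.comap (LinearMap.range ((S ^ n : X →L[ℂ] X) : X →ₗ[ℂ] X)).subtype (LinearMap.range ((S ^ (n + 1) : X →L[ℂ] X) : X →ₗ[ℂ] X)))

/-- `S` has finite ascent. -/
def HasFiniteAscent (S : X →L[ℂ] X) : Prop :=
  ∃ n : ℕ, LinearMap.ker ((S ^ n : X →L[ℂ] X) : X →ₗ[ℂ] X) = LinearMap.ker ((S ^ (n + 1) : X →L[ℂ] X) : X →ₗ[ℂ] X)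

/-- `S` has finite descent. -/
def HasFiniteDescent (S : X →L[ℂ] X) : Prop :=
  ∃ n : ℕ, LinearMap.range ((S ^ n : X →L[ℂ] X) : X →ₗ[ℂ] X) = LinearMap.range ((S ^ (n + 1) : X →L[ℂ] X) : X →ₗ[ℂ] X)

/-- The approximate point spectrum of `T`: points `λ` where `T - λ` is not bounded below. -/
def sigma_a (T : X →L[ℂ] X) : Set ℂ :=
  {l : ℂ | ¬ ∃ c > (0 : ℝ), ∀ x : X, c * ‖x‖ ≤ ‖(T - l • 1) x‖}

/-- The essential spectrum of `T`. -/
def sigma_e (T : X →L[ℂ] X) : Set ℂ := {l : ℂ | ¬ IsFredholm (T - l • 1)}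

/-- The Weyl spectrum of `T`. -/
def sigma_w (T : X →L[ℂ] X) : Set ℂ := {l : ℂ | ¬ IsWeyl (T - l • 1)}

/-- The B-Fredholm spectrum of `T`. -/
def sigma_bf (T : X →L[ℂ] X) : Set ℂ := {l : ℂ | ¬ IsBFredholm (T - l • 1)}

/-- The B-Weyl spectrum of `T`. -/
def sigma_bw (T : X →L[ℂ] X) : Set ℂ := {l : ℂ | ¬ IsBWeyl (T - l • 1)}

/-- The poles of the resolvent of `T`: spectral points with finite ascent and descent. -/
def poles (T : X →L[ℂ] X) : Set ℂ :=
  {l : ℂ | l ∈ spectrum ℂ T ∧ HasFiniteAscent (T - l • 1) ∧ HasFiniteDescent (T - l • 1)}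

/-- The poles of `T` of finite rank. -/
def poles0 (T : X →L[ℂ] X) : Set ℂ :=
  {l : ℂ | l ∈ poles T ∧ FiniteDimensional ℂ (LinearMap.ker ((T - l • 1 : X →L[ℂ] X) : X →ₗ[ℂ] X))}

/-- The left poles of `T`: points `λ ∈ σ_a(T)` with `p = p(T-λ) < ∞` and `R((T-λ)^(p+1))`
closed. -/
def leftPoles (T : X →L[ℂ] X) : Set ℂ :=
  {l : ℂ | l ∈ sigma_a T ∧ ∃ p : ℕ,
    LinearMap.ker (((T - l • 1) ^ p : X →L[ℂ] X) : X →ₗ[ℂ] X) = LinearMap.ker (((T - l • 1) ^ (p + 1) : X →L[ℂ] X) : X →ₗ[ℂ] X) ∧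
    (∀ m : ℕ, m < p → LinearMap.ker (((T - l • 1) ^ m : X →L[ℂ] X) : X →ₗ[ℂ] X) ≠ LinearMap.ker (((T - l • 1) ^ (m + 1) : X →L[ℂ] X) : X →ₗ[ℂ] X)) ∧
    IsClosed ((LinearMap.range (((T - l • 1) ^ (p + 1) : X →L[ℂ] X) : X →ₗ[ℂ] X) : Submodule ℂ X) : Set X)}

/-- The left poles of `T` of finite rank. -/
def leftPoles0 (T : X →L[ℂ] X) : Set ℂ :=
  {l : ℂ | l ∈ leftPoles T ∧ FiniteDimensional ℂ (LinearMap.ker ((T - l • 1 : X →L[ℂ] X) : X →ₗ[ℂ] X))}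

/-- The isolated points of a subset of `ℂ`. -/
def isoPts (A : Set ℂ) : Set ℂ := {l : ℂ | l ∈ A ∧ ¬ AccPt l (𝓟 A)}

/-- `E(T)`: isolated spectral points that are eigenvalues. -/
def Eset (T : X →L[ℂ] X) : Set ℂ :=
  {l : ℂ | l ∈ isoPts (spectrum ℂ T) ∧ LinearMap.ker ((T - l • 1 : X →L[ℂ] X) : X →ₗ[ℂ] X) ≠ ⊥}

/-- `E⁰(T)`: isolated spectral points that are eigenvalues of finite multiplicity. -/
def Eset0 (T : X →L[ℂ] X) : Set ℂ :=
  {l : ℂ | l ∈ isoPts (spectrum ℂ T) ∧ LinearMap.ker ((T - l • 1 : X →L[ℂ] X) : X →ₗ[ℂ] X) ≠ ⊥ ∧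
    FiniteDimensional ℂ (LinearMap.ker ((T - l • 1 : X →L[ℂ] X) : X →ₗ[ℂ] X))}

/-- `E_a(T)`: isolated points of the approximate point spectrum that are eigenvalues. -/
def Ea (T : X →L[ℂ] X) : Set ℂ :=
  {l : ℂ | l ∈ isoPts (sigma_a T) ∧ LinearMap.ker ((T - l • 1 : X →L[ℂ] X) : X →ₗ[ℂ] X) ≠ ⊥}

/-- `E_a⁰(T)`: isolated points of `σ_a(T)` that are eigenvalues of finite multiplicity. -/
def Ea0 (T : X →L[ℂ] X) : Set ℂ :=
  {l : ℂ | l ∈ isoPts (sigma_a T) ∧ LinearMap.ker ((T - l • 1 : X →L[ℂ] X) : X →ₗ[ℂ] X) ≠ ⊥ ∧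
    FiniteDimensional ℂ (LinearMap.ker ((T - l • 1 : X →L[ℂ] X) : X →ₗ[ℂ] X))}


/-!
For bounded-below `S = T - λ`, injectivity of `S ^ n` makes `S ^ n` an isomorphism of `X` onto
`R(S ^ n)` carrying `R(S)` onto `R(S ^ (n + 1))`, so the cokernel of `S` is the cokernel of the
restriction `S_[n]`. Hence a bounded-below B-Fredholm operator is Fredholm, while every Fredholm
operator is B-Fredholm (take `n = 0`). Thus `σ_bf(T) ⊆ σ_e(T) ⊆ σ_bf(T) ∪ σ_a(T)`.
-/

namespace Module.End

variable {R M : Type*} [Ring R] [AddCommGroup M] [Module R M]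

theorem map_ofInjective_range_eq_comap_range_pow_succ (f : Module.End R M) (n : ℕ)
    (hf : Function.Injective (f ^ n)) :
    (LinearMap.range f).map (LinearEquiv.ofInjective (f ^ n) hf : M →ₗ[R] LinearMap.range (f ^ n)) =
      (LinearMap.range (f ^ (n + 1))).comap (LinearMap.range (f ^ n)).subtype := by
  ext z
  simp only [Submodule.mem_map, Submodule.mem_comap, LinearMap.mem_range, Submodule.subtype_apply,
    LinearEquiv.coe_coe, exists_exists_eq_and, pow_succ, Module.End.mul_apply, Subtype.ext_iff,
    LinearEquiv.ofInjective_apply]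

noncomputable def quotientRangeEquivOfInjectivePow (f : Module.End R M) (n : ℕ)
    (hf : Function.Injective (f ^ n)) :
    (M ⧸ LinearMap.range f) ≃ₗ[R]
      LinearMap.range (f ^ n) ⧸ (LinearMap.range (f ^ (n + 1))).comap (LinearMap.range (f ^ n)).subtype :=
  Submodule.Quotient.equiv _ _ (LinearEquiv.ofInjective (f ^ n) hf)
    (map_ofInjective_range_eq_comap_range_pow_succ f n hf)

end Module.End

theorem ContinuousLinearMap.antilipschitz_of_mul_norm_le {𝕜 E F : Type*} [Ring 𝕜]
    [SeminormedAddCommGroup E] [SeminormedAddCommGroup F] [Module 𝕜 E] [Module 𝕜 F]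
    (S : E →L[𝕜] F) {c : ℝ} (hc : 0 < c) (h : ∀ x, c * ‖x‖ ≤ ‖S x‖) :
    AntilipschitzWith (Real.toNNReal c⁻¹) S :=
  S.antilipschitz_of_bound fun x => by
    rw [Real.coe_toNNReal _ (inv_nonneg.mpr hc.le), le_inv_mul_iff₀ hc]
    exact h x

omit [CompleteSpace X] in
theorem IsFredholm.isBFredholm {S : X →L[ℂ] X} (hS : IsFredholm S) : IsBFredholm S := by
  obtain ⟨hker, hrange, hcoker⟩ := hS
  have hone : Function.Injective ⇑((S : Module.End ℂ X) ^ 0) := by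
    rw [pow_zero, Module.End.one_eq_id]
    exact Function.injective_id
  have htop : LinearMap.range ((S ^ 0 : X →L[ℂ] X) : X →ₗ[ℂ] X) = ⊤ := by
    rw [ContinuousLinearMap.toLinearMap_pow, pow_zero, Module.End.one_eq_id, LinearMap.range_id]
  refine ⟨0, ?_, ?_, ?_, ?_⟩
  · rw [htop]
    exact isClosed_univ
  · simpa using hrange
  · rwa [htop, inf_top_eq]
  · rw [ContinuousLinearMap.toLinearMap_pow, ContinuousLinearMap.toLinearMap_pow]
    exact (Module.End.quotientRangeEquivOfInjectivePow _ 0 hone).finiteDimensional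

theorem isFredholm_of_antilipschitz_of_isBFredholm {S : X →L[ℂ] X} {K : NNReal}
    (hS : AntilipschitzWith K S) (hBF : IsBFredholm S) : IsFredholm S := by
  obtain ⟨n, -, -, -, hcoker⟩ := hBF
  have hpow : Function.Injective ⇑((S : Module.End ℂ X) ^ n) := by
    simpa [Module.End.coe_pow] using hS.injective.iterate n
  refine ⟨?_, ?_, ?_⟩
  · rw [LinearMap.ker_eq_bot.mpr hS.injective]
    infer_instance
  · rw [LinearMap.coe_range]
    exact hS.isClosed_range S.uniformContinuous
  · rw [ContinuousLinearMap.toLinearMap_pow, ContinuousLinearMap.toLinearMap_pow] at hcoker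
    exact (Module.End.quotientRangeEquivOfInjectivePow _ n hpow).symm.finiteDimensional

omit [CompleteSpace X] in
theorem sigma_bf_subset_sigma_e (T : X →L[ℂ] X) : sigma_bf T ⊆ sigma_e T :=
  fun _ hBF hF => hBF hF.isBFredholm

theorem sigma_e_subset_sigma_bf_union_sigma_a (T : X →L[ℂ] X) :
    sigma_e T ⊆ sigma_bf T ∪ sigma_a T :=
  fun l hl => or_iff_not_imp_left.mpr fun hBF ⟨_, hc, hbound⟩ =>
    hl (isFredholm_of_antilipschitz_of_isBFredholm
      ((T - l • 1).antilipschitz_of_mul_norm_le hc hbound) (not_not.mp hBF))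

/-- `σ_e(T) ⊆ σ_a(T)` iff `σ_bf(T) ⊆ σ_a(T)`. -/
theorem stmt3 (T : X →L[ℂ] X) :
    sigma_e T ⊆ sigma_a T ↔ sigma_bf T ⊆ sigma_a T :=
  ⟨(sigma_bf_subset_sigma_e T).trans,
    fun h => (sigma_e_subset_sigma_bf_union_sigma_a T).trans (Set.union_subset h subset_rfl)⟩
end

section
/- For a bounded linear operator T on a complex Banach space, if Π_a(T) ⊆ σ(T)\σ_bf(T), then Π_a^0(T) ⊆ σ(T)\σ_e(T). -/
open Filter Topology

variable {X : Type*} [NormedAddCommGroup X] [NormedSpace ℂ X] [CompleteSpace X]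

/-!
If `S` is B-Fredholm at level `n`, then `x ↦ [S^n x]` maps `X` into the finite-dimensional space
`R(S^n) / R(S^(n+1))` with kernel `R(S) + N(S^n)`. When `N(S)` is finite-dimensional so is
`N(S^n)`, hence `R(S)` has finite codimension, and a bounded operator on a Banach space whose range
has finite codimension has closed range: `S` is Fredholm.
-/

open Submodule LinearMap

section LinearAlgebra

variable {K V : Type*} [DivisionRing K] [AddCommGroup V] [Module K V]

theorem Submodule.finiteDimensional_quotient_of_sup (p q : Submodule K V) [FiniteDimensional K q]
    [FiniteDimensional K (V ⧸ p ⊔ q)] : FiniteDimensional K (V ⧸ p) := by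
  have : FiniteDimensional K (map p.mkQ (p ⊔ q)) := by
    rw [map_sup, mkQ_map_self, bot_sup_eq]; infer_instance
  have := (p.quotientQuotientEquivQuotient (p ⊔ q) le_sup_left).symm.finiteDimensional
  exact Module.Finite.of_submodule_quotient (map p.mkQ (p ⊔ q))

theorem Module.End.finiteDimensional_ker_pow (f : Module.End K V) [FiniteDimensional K (ker f)] :
    ∀ k : ℕ, FiniteDimensional K (ker (f ^ k))
  | 0 => by rw [pow_zero, Module.End.one_eq_id, ker_id]; infer_instance
  | k + 1 => by
    have := finiteDimensional_ker_pow f k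
    rw [pow_succ, Module.End.mul_eq_comp, ker_comp, ← fg_iff_finiteDimensional]
    refine fg_of_fg_map_of_fg_inf_ker f ?_ ?_
    · exact (fg_iff_finiteDimensional _).2 (finiteDimensional_of_le (map_comap_le _ _))
    · exact (fg_iff_finiteDimensional _).2 (finiteDimensional_of_le inf_le_right)

theorem Module.End.ker_mkQ_comp_rangeRestrict_pow (f : Module.End K V) (n : ℕ) :
    ker ((comap (range (f ^ n)).subtype (range (f ^ (n + 1)))).mkQ ∘ₗ (f ^ n).rangeRestrict) =
      range f ⊔ ker (f ^ n) := by
  rw [ker_comp, ker_mkQ, ← comap_comp, subtype_comp_codRestrict, pow_succ, Module.End.mul_eq_comp,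
    range_comp, comap_map_eq]

theorem Module.End.finiteDimensional_quotient_range_of_pow (f : Module.End K V) (n : ℕ)
    [FiniteDimensional K (ker f)]
    [FiniteDimensional K (range (f ^ n) ⧸ comap (range (f ^ n)).subtype (range (f ^ (n + 1))))] :
    FiniteDimensional K (V ⧸ range f) := by
  let ψ := (comap (range (f ^ n)).subtype (range (f ^ (n + 1)))).mkQ ∘ₗ (f ^ n).rangeRestrict
  have : FiniteDimensional K (V ⧸ ker ψ) := ψ.quotKerEquivRange.symm.finiteDimensional
  rw [ker_mkQ_comp_rangeRestrict_pow] at this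
  have := finiteDimensional_ker_pow f n
  exact finiteDimensional_quotient_of_sup (range f) (ker (f ^ n))

end LinearAlgebra

theorem ContinuousLinearMap.isClosed_range_of_finiteDimensional_quotient {𝕜 E F : Type*}
    [NontriviallyNormedField 𝕜] [CompleteSpace 𝕜] [NormedAddCommGroup E] [NormedSpace 𝕜 E]
    [CompleteSpace E] [NormedAddCommGroup F] [NormedSpace 𝕜 F] [CompleteSpace F] (S : E →L[𝕜] F)
    [FiniteDimensional 𝕜 (F ⧸ S.range)] : IsClosed (S.range : Set F) := by
  have : IsClosed (S.ker : Set E) := S.isClosed_ker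
  let S' := S.ker.liftQL S le_rfl
  have hrange : S'.range = S.range := range_liftQ _ _ _
  obtain ⟨G, hG⟩ := Submodule.exists_isCompl S.range
  have : FiniteDimensional 𝕜 G := (S.range.quotientEquivOfIsCompl G hG).finiteDimensional
  rw [← hrange] at hG ⊢
  exact S'.closed_complemented_range_of_isCompl_of_ker_eq_bot G hG G.closed_of_finiteDimensional
    (ker_liftQ_eq_bot _ _ _ le_rfl)

theorem IsBFredholm.isFredholm_of_finiteDimensional_ker {S : X →L[ℂ] X} (hS : IsBFredholm S)
    (hker : FiniteDimensional ℂ (ker (S : X →ₗ[ℂ] X))) : IsFredholm S := by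
  obtain ⟨n, -, -, -, hquot⟩ := hS
  rw [ContinuousLinearMap.toLinearMap_pow, ContinuousLinearMap.toLinearMap_pow] at hquot
  have := Module.End.finiteDimensional_quotient_range_of_pow (S : X →ₗ[ℂ] X) n
  exact ⟨hker, S.isClosed_range_of_finiteDimensional_quotient, this⟩

/-- If `Π_a(T) ⊆ σ(T)\σ_bf(T)` then `Π_a⁰(T) ⊆ σ(T)\σ_e(T)`. -/
theorem stmt4 (T : X →L[ℂ] X) (h : leftPoles T ⊆ spectrum ℂ T \ sigma_bf T) :
    leftPoles0 T ⊆ spectrum ℂ T \ sigma_e T := by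
  rintro l ⟨hl, hker⟩
  obtain ⟨hspec, hbf⟩ := h hl
  have hbf : IsBFredholm (T - l • 1) := not_not.1 hbf
  exact ⟨hspec, not_not.2 (hbf.isFredholm_of_finiteDimensional_ker hker)⟩
end

section
/- For a bounded linear operator T on a complex Banach space, if Π_a(T) ⊆ σ(T)\σ_bw(T), then Π_a^0(T) = Π^0(T). -/
open Filter Topology

variable {X : Type*} [NormedAddCommGroup X] [NormedSpace ℂ X] [CompleteSpace X]

/-!
At a finite-rank left pole `λ` the hypothesis makes `S = T - λ` B-Weyl: for some `n` the
restriction of `S` to `R(S^n)` has kernel `ker S ∩ R(S^n)` and cokernel `R(S^n)/R(S^(n+1))` of the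
same finite dimension. This persists for all larger `n`, because `S` induces a surjection
`R(S^n)/R(S^(n+1)) → R(S^(n+1))/R(S^(n+2))` whose kernel is the image of `ker S ∩ R(S^n)`, an
isomorphic copy of `(ker S ∩ R(S^n))/(ker S ∩ R(S^(n+1)))`. Past the ascent `ker S ∩ R(S^n) = 0`,
so the cokernel vanishes as well: the descent is finite and `λ` is a pole.

Conversely, at a finite-rank pole, `X = ker S^N + R(S^N)` for `N` beyond the descent, and
`ker S^N` is finite-dimensional, so every `R(S^m)` has finite codimension and is therefore closed
by the open mapping theorem. Finally `ker S ≠ 0`, since an injective `S` with finite descent is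
bijective, hence invertible; so `λ ∈ σ_a(T)`.
-/

open LinearMap Module

namespace Module.End

variable {K V : Type*} [DivisionRing K] [AddCommGroup V] [Module K V] (f : End K V)

lemma range_pow_succ (n : ℕ) : range (f ^ (n + 1)) = (range (f ^ n)).map f := by
  rw [pow_succ', mul_eq_comp, range_comp]

lemma mem_range_pow_succ {n : ℕ} {x : V} (hx : x ∈ range (f ^ n)) :
    f x ∈ range (f ^ (n + 1)) :=
  f.range_pow_succ n ▸ Submodule.mem_map_of_mem hx

lemma range_pow_antitone : Antitone fun n ↦ range (f ^ n) :=
  f.iterateRange.monotone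

variable {f}

lemma range_pow_eq_of_le {d : ℕ} (hd : range (f ^ d) = range (f ^ (d + 1))) {m : ℕ}
    (hm : d ≤ m) : range (f ^ m) = range (f ^ d) := by
  induction m, hm using Nat.le_induction with
  | base => rfl
  | succ m _ ih => rw [f.range_pow_succ, ih, ← f.range_pow_succ, hd]

lemma ker_inf_range_pow_eq_bot {p : ℕ} (hp : ker (f ^ p) = ker (f ^ (p + 1))) {m : ℕ}
    (hm : p ≤ m) : ker f ⊓ range (f ^ m) = ⊥ := by
  rw [eq_bot_iff]
  rintro _ ⟨hx, y, rfl⟩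
  obtain ⟨k, rfl⟩ := Nat.exists_eq_add_of_le hm
  have hy : y ∈ ker (f ^ (p + (k + 1))) := by
    rwa [← add_assoc, LinearMap.mem_ker, pow_succ', mul_apply]
  rwa [← ker_pow_constant hp, ker_pow_constant hp k] at hy

lemma codisjoint_ker_pow_range_pow {d : ℕ} (hd : range (f ^ d) = range (f ^ (d + 1))) {N : ℕ}
    (hN : d ≤ N) : Codisjoint (ker (f ^ N)) (range (f ^ N)) := by
  refine codisjoint_iff.mpr (Submodule.eq_top_iff'.mpr fun x ↦ ?_)
  obtain ⟨y, hy⟩ : (f ^ N) x ∈ range (f ^ (N + N)) := by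
    rw [range_pow_eq_of_le hd (hN.trans (N.le_add_right N)), ← range_pow_eq_of_le hd hN]
    exact mem_range_self _ x
  refine Submodule.mem_sup.mpr
    ⟨x - (f ^ N) y, ?_, (f ^ N) y, mem_range_self _ y, sub_add_cancel _ _⟩
  rw [LinearMap.mem_ker, map_sub, ← mul_apply, ← pow_add, hy, sub_self]

lemma surjective_of_injective_of_range_pow_eq (hf : Function.Injective f) {d : ℕ}
    (hd : range (f ^ d) = range (f ^ (d + 1))) : Function.Surjective f := by
  have hker : ker (f ^ (d + 1)) = ⊥ := ker_eq_bot.mpr (by rw [coe_pow]; exact hf.iterate _)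
  have hrange := (codisjoint_ker_pow_range_pow hd d.le_succ).eq_top
  rw [hker, bot_sup_eq] at hrange
  rw [← range_eq_top, eq_top_iff, ← hrange, ← pow_one f]
  exact f.range_pow_antitone (Nat.le_add_left 1 d)

lemma finiteDimensional_ker_pow_s5 [FiniteDimensional K (ker f)] (m : ℕ) :
    FiniteDimensional K (ker (f ^ m)) := by
  induction m with
  | zero => rw [pow_zero, one_eq_id, ker_id]; infer_instance
  | succ m ih =>
    refine Module.Finite.iff_fg.mpr (Submodule.fg_of_fg_map_of_fg_inf_ker (f ^ m) ?_ ?_)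
    · refine Module.Finite.iff_fg.mp (Submodule.finiteDimensional_of_le (S₂ := ker f) ?_)
      rintro _ ⟨y, hy, rfl⟩
      rwa [LinearMap.mem_ker, ← mul_apply, ← pow_succ']
    · exact Module.Finite.iff_fg.mp (Submodule.finiteDimensional_of_le inf_le_right)

lemma cofg_range_pow [FiniteDimensional K (ker f)] {d : ℕ}
    (hd : range (f ^ d) = range (f ^ (d + 1))) (m : ℕ) : (range (f ^ m)).CoFG := by
  have := finiteDimensional_ker_pow_s5 (f := f) (max d m)
  refine Submodule.CoFG.of_le (f.range_pow_antitone (le_max_right d m)) ?_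
  exact (Module.Finite.iff_fg.mp this).cofg_of_codisjoint
    (codisjoint_ker_pow_range_pow hd (le_max_left d m))

variable (f)

/-- The cokernel of the restriction of `f` to `range (f ^ n)`. -/
abbrev RangePowCoker (n : ℕ) : Type _ :=
  range (f ^ n) ⧸ (range (f ^ (n + 1))).comap (range (f ^ n)).subtype

def rangePowCokerMap (n : ℕ) : f.RangePowCoker n →ₗ[K] f.RangePowCoker (n + 1) :=
  Submodule.mapQ _ _ (f.restrict fun _ ↦ f.mem_range_pow_succ) fun _ ↦ f.mem_range_pow_succ

lemma rangePowCokerMap_mk (n : ℕ) (x : range (f ^ n)) :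
    f.rangePowCokerMap n (Submodule.Quotient.mk x) =
      Submodule.Quotient.mk ⟨f x, f.mem_range_pow_succ x.2⟩ :=
  rfl

lemma rangePowCokerMap_surjective (n : ℕ) : Function.Surjective (f.rangePowCokerMap n) := by
  rintro ⟨y, hy⟩
  obtain ⟨x, hx, rfl⟩ : y ∈ (range (f ^ n)).map f := f.range_pow_succ n ▸ hy
  exact ⟨Submodule.Quotient.mk ⟨x, hx⟩, rfl⟩

def kerInfRangePowToCoker (n : ℕ) :
    (ker f ⊓ range (f ^ n) : Submodule K V) →ₗ[K] f.RangePowCoker n :=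
  Submodule.mkQ _ ∘ₗ Submodule.inclusion inf_le_right

lemma ker_kerInfRangePowToCoker (n : ℕ) :
    ker (f.kerInfRangePowToCoker n) =
      (ker f ⊓ range (f ^ (n + 1))).comap (ker f ⊓ range (f ^ n)).subtype := by
  ext ⟨x, hxk, hxr⟩
  simp only [kerInfRangePowToCoker, LinearMap.mem_ker, coe_comp, Function.comp_apply,
    Submodule.mkQ_apply, Submodule.Quotient.mk_eq_zero, Submodule.mem_comap,
    Submodule.subtype_apply, Submodule.coe_inclusion, Submodule.mem_inf]
  exact ⟨fun h ↦ ⟨hxk, h⟩, And.right⟩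

lemma range_kerInfRangePowToCoker (n : ℕ) :
    range (f.kerInfRangePowToCoker n) = ker (f.rangePowCokerMap n) := by
  apply le_antisymm
  · rintro _ ⟨⟨x, hx⟩, rfl⟩
    rw [LinearMap.mem_ker, kerInfRangePowToCoker, comp_apply, Submodule.mkQ_apply,
      rangePowCokerMap_mk, Submodule.Quotient.mk_eq_zero, Submodule.mem_comap,
      Submodule.subtype_apply]
    simp only [Submodule.coe_inclusion, LinearMap.mem_ker.mp hx.1]
    exact zero_mem _
  · intro z h
    obtain ⟨⟨x, hx⟩, rfl⟩ := Submodule.Quotient.mk_surjective _ z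
    rw [LinearMap.mem_ker, rangePowCokerMap_mk, Submodule.Quotient.mk_eq_zero,
      Submodule.mem_comap, Submodule.subtype_apply, range_pow_succ] at h
    obtain ⟨z, hz, hfz⟩ := h
    have hxz : x - z ∈ ker f ⊓ range (f ^ n) :=
      ⟨by simp [hfz], sub_mem hx (f.range_pow_antitone n.le_succ hz)⟩
    refine ⟨⟨x - z, hxz⟩, (Submodule.Quotient.eq _).mpr ?_⟩
    simpa [Submodule.mem_comap] using hz

/-- The restriction of `f` to `range (f ^ n)` is Fredholm of index zero in the algebraic sense:
its kernel `ker f ⊓ range (f ^ n)` and its cokernel are finite-dimensional of equal dimension. -/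
def IsIndexZeroOnRangePow (n : ℕ) : Prop :=
  FiniteDimensional K (ker f ⊓ range (f ^ n) : Submodule K V) ∧
    FiniteDimensional K (f.RangePowCoker n) ∧
      finrank K (ker f ⊓ range (f ^ n) : Submodule K V) = finrank K (f.RangePowCoker n)

variable {f}

lemma IsIndexZeroOnRangePow.succ {n : ℕ} (h : f.IsIndexZeroOnRangePow n) :
    f.IsIndexZeroOnRangePow (n + 1) := by
  obtain ⟨hK, hQ, heq⟩ := h
  have hle : ker f ⊓ range (f ^ (n + 1)) ≤ ker f ⊓ range (f ^ n) :=
    inf_le_inf_left _ (f.range_pow_antitone n.le_succ)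
  have hK' := Submodule.finiteDimensional_of_le hle
  have hQ' := Module.Finite.of_surjective _ (f.rangePowCokerMap_surjective n)
  refine ⟨hK', hQ', ?_⟩
  have hφ := (f.rangePowCokerMap n).finrank_range_add_finrank_ker
  rw [range_eq_top.mpr (f.rangePowCokerMap_surjective n), finrank_top,
    ← range_kerInfRangePowToCoker] at hφ
  have hψ := (f.kerInfRangePowToCoker n).finrank_range_add_finrank_ker
  rw [ker_kerInfRangePowToCoker, (Submodule.comapSubtypeEquivOfLe hle).finrank_eq] at hψ
  omega

lemma IsIndexZeroOnRangePow.mono {n m : ℕ} (h : f.IsIndexZeroOnRangePow n) (hnm : n ≤ m) :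
    f.IsIndexZeroOnRangePow m := by
  induction m, hnm using Nat.le_induction with
  | base => exact h
  | succ m _ ih => exact ih.succ

lemma IsIndexZeroOnRangePow.range_pow_eq {n p : ℕ} (h : f.IsIndexZeroOnRangePow n)
    (hp : ker (f ^ p) = ker (f ^ (p + 1))) : range (f ^ (n + p)) = range (f ^ (n + p + 1)) := by
  obtain ⟨-, hQ, heq⟩ := h.mono (n.le_add_right p)
  rw [ker_inf_range_pow_eq_bot hp (p.le_add_left n), finrank_bot] at heq
  have := Module.finrank_zero_iff.mp heq.symm
  refine le_antisymm ?_ (f.range_pow_antitone (n + p).le_succ)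
  rw [← Submodule.comap_subtype_eq_top]
  exact Submodule.Quotient.subsingleton_iff.mp this

end Module.End

theorem ContinuousLinearMap.isClosed_range_of_cofg {𝕜 E F : Type*} [NontriviallyNormedField 𝕜]
    [CompleteSpace 𝕜] [NormedAddCommGroup E] [NormedSpace 𝕜 E] [CompleteSpace E]
    [NormedAddCommGroup F] [NormedSpace 𝕜 F] [CompleteSpace F] (A : E →L[𝕜] F)
    (h : (range (A : E →ₗ[𝕜] F)).CoFG) : IsClosed (range (A : E →ₗ[𝕜] F) : Set F) := by
  obtain ⟨C, hC⟩ := (range (A : E →ₗ[𝕜] F)).exists_isCompl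
  have := Module.Finite.iff_fg.mpr (h.fg_of_isCompl hC)
  have := C.complete_of_finiteDimensional.completeSpace_coe
  set B : E × C →L[𝕜] F := A.coprod C.subtypeL
  have hB : Function.Surjective B := by
    intro y
    obtain ⟨_, ⟨x, rfl⟩, c, hc, rfl⟩ :=
      Submodule.mem_sup.mp (hC.sup_eq_top ▸ Submodule.mem_top : y ∈ range (A : E →ₗ[𝕜] F) ⊔ C)
    exact ⟨(x, ⟨c, hc⟩), rfl⟩
  have hpre : B ⁻¹' (range (A : E →ₗ[𝕜] F)) = Prod.snd ⁻¹' {0} := by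
    ext ⟨x, c⟩
    simp only [Set.mem_preimage, SetLike.mem_coe, Set.mem_singleton_iff, B,
      ContinuousLinearMap.coprod_apply, Submodule.subtypeL_apply]
    rw [Submodule.add_mem_iff_right _ (⟨x, rfl⟩ : A x ∈ range (A : E →ₗ[𝕜] F))]
    exact ⟨fun hc ↦ Subtype.ext (Submodule.disjoint_def.mp hC.disjoint _ hc c.2),
      fun hc ↦ hc ▸ zero_mem _⟩
  rw [← ((B.isOpenMap hB).isQuotientMap B.continuous hB).isClosed_preimage, hpre]
  exact isClosed_singleton.preimage continuous_snd

section

variable {E : Type*} [NormedAddCommGroup E] [NormedSpace ℂ E]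

open ContinuousLinearMap

lemma IsBWeyl.isIndexZeroOnRangePow {S : E →L[ℂ] E} (h : IsBWeyl S) :
    ∃ n, End.IsIndexZeroOnRangePow (S : E →ₗ[ℂ] E) n := by
  obtain ⟨n, -, -, hK, hQ, heq⟩ := h
  rw [toLinearMap_pow] at hK
  rw [toLinearMap_pow, toLinearMap_pow] at hQ heq
  exact ⟨n, hK, hQ, heq⟩

lemma IsBWeyl.hasFiniteDescent {S : E →L[ℂ] E} (h : IsBWeyl S) {p : ℕ}
    (hp : ker ((S ^ p : E →L[ℂ] E) : E →ₗ[ℂ] E) =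
      ker ((S ^ (p + 1) : E →L[ℂ] E) : E →ₗ[ℂ] E)) :
    HasFiniteDescent S := by
  obtain ⟨n, hn⟩ := h.isIndexZeroOnRangePow
  rw [toLinearMap_pow, toLinearMap_pow] at hp
  exact ⟨n + p, by simpa only [toLinearMap_pow] using hn.range_pow_eq hp⟩

lemma mem_sigma_a_of_ker_ne_bot {T : E →L[ℂ] E} {l : ℂ}
    (h : ker ((T - l • 1 : E →L[ℂ] E) : E →ₗ[ℂ] E) ≠ ⊥) : l ∈ sigma_a T := by
  obtain ⟨x, hx, hx0⟩ := (Submodule.ne_bot_iff _).mp h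
  rintro ⟨c, hc, hb⟩
  have := hb x
  rw [show (T - l • 1) x = 0 from hx, norm_zero] at this
  exact (mul_pos hc (norm_pos_iff.mpr hx0)).not_ge this

lemma ker_ne_bot_of_mem_poles [CompleteSpace E] {T : E →L[ℂ] E} {l : ℂ} (hl : l ∈ poles T) :
    ker ((T - l • 1 : E →L[ℂ] E) : E →ₗ[ℂ] E) ≠ ⊥ := by
  obtain ⟨hspec, -, d, hd⟩ := hl
  intro hbot
  rw [toLinearMap_pow, toLinearMap_pow] at hd
  have hinj := ker_eq_bot.mp hbot
  apply spectrum.mem_iff.mp hspec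
  rw [Algebra.algebraMap_eq_smul_one, ← neg_sub]
  exact (isUnit_iff_bijective.mpr
    ⟨hinj, End.surjective_of_injective_of_range_pow_eq hinj hd⟩).neg

theorem poles0_subset_leftPoles0 [CompleteSpace E] (T : E →L[ℂ] E) :
    poles0 T ⊆ leftPoles0 T := by
  classical
  rintro l ⟨hpole, hker⟩
  have hsigma := mem_sigma_a_of_ker_ne_bot (ker_ne_bot_of_mem_poles hpole)
  obtain ⟨-, hasc, d, hd⟩ := hpole
  have hasc' : ∃ p, ker (((T - l • 1) ^ p : E →L[ℂ] E) : E →ₗ[ℂ] E) =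
      ker (((T - l • 1) ^ (p + 1) : E →L[ℂ] E) : E →ₗ[ℂ] E) := hasc
  refine ⟨⟨hsigma, Nat.find hasc', Nat.find_spec hasc', fun m hm ↦ Nat.find_min hasc' hm,
    isClosed_range_of_cofg _ ?_⟩, hker⟩
  rw [toLinearMap_pow, toLinearMap_pow] at hd
  rw [toLinearMap_pow]
  exact End.cofg_range_pow hd _

end

/-- If `Π_a(T) ⊆ σ(T)\σ_bw(T)` then `Π_a⁰(T) = Π⁰(T)`. -/
theorem stmt5 (T : X →L[ℂ] X) (h : leftPoles T ⊆ spectrum ℂ T \ sigma_bw T) :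
    leftPoles0 T = poles0 T := by
  refine Set.Subset.antisymm ?_ (poles0_subset_leftPoles0 T)
  rintro l ⟨hl, hker⟩
  obtain ⟨hspec, hbw⟩ := h hl
  obtain ⟨-, p, hp, -⟩ := hl
  exact ⟨⟨hspec, ⟨p, hp⟩, IsBWeyl.hasFiniteDescent (not_not.mp hbw) hp⟩, hker⟩
end

section
/- A bounded linear operator T on a complex Banach space belongs to class (aw_e) if and only if T belongs to class (aw) and σ_e(T) = σ_w(T). -/
open Filter Topology

variable {X : Type*} [NormedAddCommGroup X] [NormedSpace ℂ X] [CompleteSpace X]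

/-!
Only `σ_w(T) ⊆ σ_e(T)` under `(aw_e)` needs an argument. Let `λ ∈ σ(T) \ σ_e(T)`. By `(aw_e)`,
`λ` is isolated in `σ_a(T)`, so for `μ ≠ λ` near `λ` the operator `T - μ` is bounded below and,
the Fredholm index being locally constant, Fredholm of the same index as `T - λ`. Such a `μ`
cannot lie in `σ(T)`, since `(aw_e)` would make it an eigenvalue; so `T - μ` is invertible and
`T - λ` has index zero.

For the local constancy, write `X = ker S ⊕ M` and `X = R(S) ⊕ N`. The map `(m, n) ↦ S' m + n`
is an isomorphism `M × N → X` for `S' = S`, hence for all `S'` near `S`. Then `S'` is injective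
on `M` and `S'(M)` is a closed complement of `N`, and comparing `S'` with the induced map
`X / M → X / S'(M)` between finite-dimensional spaces gives `ind S' = dim (X / M) - dim N = ind S`.
-/

section QuotientIndex

open LinearMap

variable {K V W : Type*} [Field K] [AddCommGroup V] [Module K V] [AddCommGroup W] [Module K W]

theorem Submodule.ker_mapQ_map (f : V →ₗ[K] W) (M : Submodule K V) :
    ker (M.mapQ (M.map f) f (M.le_comap_map f)) = range (M.mkQ ∘ₗ (ker f).subtype) := by
  ext y
  obtain ⟨v, rfl⟩ := M.mkQ_surjective y
  simp only [LinearMap.mem_ker, Submodule.mkQ_apply, Submodule.mapQ_apply,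
    Submodule.Quotient.mk_eq_zero, Submodule.mem_map, mem_range, coe_comp, Submodule.coe_subtype,
    Function.comp_apply, Subtype.exists]
  constructor
  · rintro ⟨m, hm, hfm⟩
    exact ⟨v - m, by simp [hfm], (Submodule.Quotient.eq M).mpr (by simpa using hm)⟩
  · rintro ⟨k, hk, hkv⟩
    exact ⟨v - k, (Submodule.Quotient.eq M).mp hkv.symm, by simp [LinearMap.mem_ker.mp hk]⟩

theorem Submodule.injective_mkQ_comp_subtype {N M : Submodule K V} (h : Disjoint N M) :
    Function.Injective (M.mkQ ∘ₗ N.subtype) := by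
  rw [← ker_eq_bot, ker_comp, Submodule.ker_mkQ, ← Submodule.disjoint_iff_comap_eq_bot]
  exact h

theorem LinearMap.finrank_ker_add_finrank_quotient_map {f : V →ₗ[K] W} {M : Submodule K V}
    (hM : Disjoint (ker f) M) [FiniteDimensional K (V ⧸ M)] [FiniteDimensional K (W ⧸ M.map f)] :
    FiniteDimensional K (ker f) ∧ FiniteDimensional K (W ⧸ range f) ∧
      Module.finrank K (ker f) + Module.finrank K (W ⧸ M.map f) =
        Module.finrank K (W ⧸ range f) + Module.finrank K (V ⧸ M) := by
  set g := M.mapQ (M.map f) f (M.le_comap_map f)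
  have eKer : ker f ≃ₗ[K] ker g :=
    (LinearEquiv.ofInjective _ (Submodule.injective_mkQ_comp_subtype hM)).trans
      (LinearEquiv.ofEq _ _ (Submodule.ker_mapQ_map f M).symm)
  have eCoker : (W ⧸ range f) ≃ₗ[K] (W ⧸ M.map f) ⧸ range g :=
    ((Submodule.quotientQuotientEquivQuotient _ _ LinearMap.map_le_range).symm).trans
      (Submodule.quotEquivOfEq _ _ (Submodule.range_mapQ _ _ _ _).symm)
  refine ⟨eKer.symm.finiteDimensional, eCoker.symm.finiteDimensional, ?_⟩
  have rankNullity := g.finrank_range_add_finrank_ker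
  have cokerRank := (range g).finrank_quotient_add_finrank
  rw [eKer.finrank_eq, eCoker.finrank_eq]
  omega

end QuotientIndex

section CoprodSplitting

open LinearMap

variable {R E F : Type*} [Ring R] [AddCommGroup E] [Module R E] [AddCommGroup F] [Module R F]

theorem LinearMap.bijective_coprod_of_isCompl {f : E →ₗ[R] F} {M : Submodule R E}
    {N : Submodule R F} (hM : IsCompl (ker f) M) (hN : IsCompl (range f) N) :
    Function.Bijective ((f ∘ₗ M.subtype).coprod N.subtype) := by
  constructor
  · rw [← ker_eq_bot, Submodule.eq_bot_iff]
    rintro ⟨m, n⟩ h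
    have hfm : f m = -n := eq_neg_of_add_eq_zero_left h
    have hn : (n : F) = 0 :=
      Submodule.disjoint_def.mp hN.disjoint _ ⟨-(m : E), by simp [hfm]⟩ n.2
    have hm : (m : E) = 0 :=
      Submodule.disjoint_def.mp hM.disjoint _ (by simp [hfm, hn]) m.2
    simp [Prod.ext_iff, Subtype.ext_iff, hm, hn]
  · intro y
    obtain ⟨r, ⟨x, rfl⟩, n, hn, rfl⟩ :=
      Submodule.mem_sup.mp (hN.sup_eq_top ▸ Submodule.mem_top (x := y))
    obtain ⟨k, hk, m, hm, rfl⟩ :=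
      Submodule.mem_sup.mp (hM.sup_eq_top ▸ Submodule.mem_top (x := x))
    exact ⟨(⟨m, hm⟩, ⟨n, hn⟩), by simp [LinearMap.mem_ker.mp hk]⟩

theorem LinearMap.isCompl_map_of_bijective_coprod {f : E →ₗ[R] F} {M : Submodule R E}
    {N : Submodule R F} (h : Function.Bijective ((f ∘ₗ M.subtype).coprod N.subtype)) :
    Disjoint (ker f) M ∧ IsCompl (M.map f) N := by
  refine ⟨Submodule.disjoint_def.mpr fun x hx hxM => ?_, ⟨Submodule.disjoint_def.mpr ?_, ?_⟩⟩
  · have := @h.1 (⟨x, hxM⟩, 0) 0 (by simpa using LinearMap.mem_ker.mp hx)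
    simpa using congrArg (fun p => (p.1 : E)) this
  · rintro _ ⟨m, hm, rfl⟩ hfm
    have := @h.1 (⟨m, hm⟩, 0) (0, ⟨f m, hfm⟩) (by simp)
    simpa using (congrArg (fun p => (p.2 : F)) this).symm
  · rw [codisjoint_iff, Submodule.eq_top_iff']
    intro y
    obtain ⟨⟨m, n⟩, rfl⟩ := h.2 y
    exact Submodule.add_mem_sup ⟨m, m.2, rfl⟩ n.2

end CoprodSplitting

section Topological

open ContinuousLinearMap

variable {𝕜 E F : Type*} [NontriviallyNormedField 𝕜] [NormedAddCommGroup E] [NormedSpace 𝕜 E]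
  [NormedAddCommGroup F] [NormedSpace 𝕜 F]

theorem ContinuousLinearMap.isClosed_map_of_coprod_eq {f : E →L[𝕜] F} {M : Submodule 𝕜 E}
    {N : Submodule 𝕜 F} (e : (M × N) ≃L[𝕜] F) (he : ∀ p : M × N, e p = f p.1 + p.2) :
    IsClosed (M.map (f : E →ₗ[𝕜] F) : Set F) := by
  suffices M.map (f : E →ₗ[𝕜] F) = (snd 𝕜 M N ∘L (e.symm : F →L[𝕜] M × N)).ker by
    rw [this]
    exact isClosed_ker _
  ext y
  simp only [Submodule.mem_map, LinearMap.mem_ker, ContinuousLinearMap.coe_coe,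
    ContinuousLinearMap.coe_comp, Function.comp_apply, ContinuousLinearMap.coe_snd',
    ContinuousLinearEquiv.coe_coe]
  constructor
  · rintro ⟨m, hm, rfl⟩
    have : e.symm (f m) = (⟨m, hm⟩, 0) := e.symm_apply_eq.mpr (by simp [he])
    simp [this]
  · intro h
    refine ⟨(e.symm y).1, (e.symm y).1.2, ?_⟩
    simpa [h] using (he (e.symm y)).symm

end Topological

section Fredholm

variable {E : Type*} [NormedAddCommGroup E] [NormedSpace ℂ E]

open LinearMap

theorem isFredholm_of_coprod_eq {S : E →L[ℂ] E} {M N : Submodule ℂ E}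
    [FiniteDimensional ℂ (E ⧸ M)] [FiniteDimensional ℂ N] (e : (M × N) ≃L[ℂ] E)
    (he : ∀ p : M × N, e p = S p.1 + p.2) :
    IsFredholm S ∧ Module.finrank ℂ (ker (S : E →ₗ[ℂ] E)) + Module.finrank ℂ N =
      Module.finrank ℂ (E ⧸ range (S : E →ₗ[ℂ] E)) + Module.finrank ℂ (E ⧸ M) := by
  have hbij : Function.Bijective (((S : E →ₗ[ℂ] E) ∘ₗ M.subtype).coprod N.subtype) := by
    convert e.bijective using 1
    ext p
    simp [he]
  obtain ⟨hdisj, hcompl⟩ := isCompl_map_of_bijective_coprod hbij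
  have eN := Submodule.quotientEquivOfIsCompl _ _ hcompl
  have := eN.symm.finiteDimensional
  obtain ⟨hker, hcoker, hrank⟩ := finrank_ker_add_finrank_quotient_map hdisj
  refine ⟨⟨hker, Submodule.isClosed_mono_of_finiteDimensional_quotient
    (S.isClosed_map_of_coprod_eq e he) map_le_range, hcoker⟩, ?_⟩
  rwa [← eN.finrank_eq]

theorem isWeyl_of_bijective {S : E →L[ℂ] E} (hS : Function.Bijective S) : IsWeyl S := by
  have hker : ker (S : E →ₗ[ℂ] E) = ⊥ := ker_eq_bot.mpr hS.1
  have hrange : range (S : E →ₗ[ℂ] E) = ⊤ := range_eq_top.mpr hS.2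
  have : Subsingleton (E ⧸ range (S : E →ₗ[ℂ] E)) := Submodule.Quotient.subsingleton_iff.mpr hrange
  refine ⟨⟨hker ▸ inferInstance, hrange ▸ isClosed_univ, inferInstance⟩, ?_⟩
  rw [hker, finrank_bot, Module.finrank_zero_of_subsingleton]

theorem injective_sub_smul_one_of_notMem_sigma_a {T : E →L[ℂ] E} {l : ℂ}
    (hl : l ∉ sigma_a T) : Function.Injective (T - l • 1 : E →L[ℂ] E) := by
  obtain ⟨c, hc, hbound⟩ := not_not.mp hl
  rw [injective_iff_map_eq_zero]
  intro x hx
  have := hbound x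
  rw [hx, norm_zero] at this
  exact norm_le_zero_iff.mp (nonpos_of_mul_nonpos_right this hc)

variable [CompleteSpace E]

theorem IsFredholm.eventually_isFredholm_index_eq {S : E →L[ℂ] E} (hS : IsFredholm S) :
    ∀ᶠ S' in 𝓝 S, IsFredholm S' ∧
      Module.finrank ℂ (ker (S' : E →ₗ[ℂ] E)) + Module.finrank ℂ (E ⧸ range (S : E →ₗ[ℂ] E)) =
        Module.finrank ℂ (E ⧸ range (S' : E →ₗ[ℂ] E)) + Module.finrank ℂ (ker (S : E →ₗ[ℂ] E)) := by
  obtain ⟨hK, -, hQ⟩ := hS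
  have hKc := Submodule.ClosedComplemented.of_finiteDimensional (ker (S : E →ₗ[ℂ] E))
  obtain ⟨M, hMc, hKM⟩ := hKc.exists_isClosed_isCompl
  obtain ⟨N, hRN⟩ := (range (S : E →ₗ[ℂ] E)).exists_isCompl
  have eM := Submodule.quotientEquivOfIsCompl _ _ hKM.symm
  have eN := Submodule.quotientEquivOfIsCompl _ _ hRN
  have := eM.symm.finiteDimensional
  have := eN.finiteDimensional
  have : CompleteSpace M := hMc.completeSpace_coe
  let Φ : (E →L[ℂ] E) → (M × N →L[ℂ] E) := fun S' => (S' ∘L M.subtypeL).coprod N.subtypeL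
  have hbij := bijective_coprod_of_isCompl hKM hRN
  let e := ContinuousLinearEquiv.ofBijective (Φ S) (ker_eq_bot.mpr (by simpa [Φ] using hbij.1))
    (range_eq_top.mpr (by simpa [Φ] using hbij.2))
  have hΦ : Continuous Φ := by fun_prop
  filter_upwards [hΦ.continuousAt.preimage_mem_nhds e.nhds] with S' ⟨e', he'⟩
  obtain ⟨hFred, hrank⟩ := isFredholm_of_coprod_eq e' fun p => by
    simpa [Φ] using congrArg (fun g : M × N →L[ℂ] E => g p) he'
  exact ⟨hFred, by rwa [eN.finrank_eq, ← eM.finrank_eq]⟩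

theorem IsFredholm.isWeyl_of_frequently_isWeyl {S : E →L[ℂ] E} (hS : IsFredholm S)
    (h : ∃ᶠ S' in 𝓝 S, IsWeyl S') : IsWeyl S := by
  obtain ⟨S', ⟨-, hrank⟩, -, hS'⟩ := (hS.eventually_isFredholm_index_eq.and_frequently h).exists
  exact ⟨hS, by omega⟩

theorem bijective_sub_smul_one_of_notMem_spectrum {T : E →L[ℂ] E} {l : ℂ}
    (hl : l ∉ spectrum ℂ T) : Function.Bijective (T - l • 1 : E →L[ℂ] E) := by
  rw [← ContinuousLinearMap.isUnit_iff_bijective, ← neg_sub, ← Algebra.algebraMap_eq_smul_one]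
  exact (spectrum.notMem_iff.mp hl).neg

theorem isWeyl_sub_smul_one_of_spectrum_diff_sigma_e_eq {T : E →L[ℂ] E}
    (hT : spectrum ℂ T \ sigma_e T = Ea0 T) {l : ℂ} (hl : l ∉ sigma_e T) :
    IsWeyl (T - l • 1) := by
  by_cases hsp : l ∈ spectrum ℂ T
  case neg => exact isWeyl_of_bijective (bijective_sub_smul_one_of_notMem_spectrum hsp)
  have hFred : IsFredholm (T - l • 1) := not_not.mp hl
  have hiso : ∀ᶠ μ in 𝓝[≠] l, μ ∉ sigma_a T := by
    have hEa : l ∈ Ea0 T := hT ▸ ⟨hsp, hl⟩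
    simpa [accPt_iff_frequently_nhdsNE, Filter.not_frequently] using hEa.1.2
  have hcont : Tendsto (fun μ : ℂ => T - μ • 1) (𝓝[≠] l) (𝓝 (T - l • 1)) :=
    (Continuous.tendsto (by fun_prop) l).mono_left nhdsWithin_le_nhds
  have hFredNear : ∀ᶠ μ in 𝓝[≠] l, IsFredholm (T - μ • 1) :=
    (hcont.eventually hFred.eventually_isFredholm_index_eq).mono fun _ h => h.1
  refine hFred.isWeyl_of_frequently_isWeyl
    (hcont.frequently ((hiso.and hFredNear).mono ?_).frequently)
  rintro μ ⟨hμa, hμF⟩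
  have hinj := injective_sub_smul_one_of_notMem_sigma_a hμa
  refine isWeyl_of_bijective ⟨hinj, ?_⟩
  by_contra hsurj
  have hμ : μ ∈ spectrum ℂ T := by
    by_contra hμ
    exact hsurj (bijective_sub_smul_one_of_notMem_spectrum hμ).2
  have hEa : μ ∈ Ea0 T := hT ▸ ⟨hμ, not_not.mpr hμF⟩
  exact hEa.2.1 (LinearMap.ker_eq_bot.mpr hinj)

end Fredholm

/-- `T ∈ (aw_e)` iff `T ∈ (aw)` and `σ_e(T) = σ_w(T)`. -/
theorem stmt14 (T : X →L[ℂ] X) :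
    spectrum ℂ T \ sigma_e T = Ea0 T ↔
      spectrum ℂ T \ sigma_w T = Ea0 T ∧ sigma_e T = sigma_w T := by
  constructor
  · intro h
    have hew : sigma_e T = sigma_w T :=
      subset_antisymm (fun l hle hW => hle hW.1)
        fun l hlw hle => hlw (isWeyl_sub_smul_one_of_spectrum_diff_sigma_e_eq h (not_not.mpr hle))
    exact ⟨hew ▸ h, hew⟩
  · rintro ⟨h, hew⟩
    rwa [hew]
end
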